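/- arXiv:1411.3880 — 2 statements merged into one kernel-verified Lean document; each statement's English description precedes it below -/
import Mathlib

section
/- Let P be a probabilistic finite automaton and let G be the reduction POMDP built from P, with target set T={target}. If there exists no word w ∈ A* accepted by P with probability strictly greater than 1/2, then the optimal cost optCost in G equals 1. -/
open Finset Filter
open scoped Classical

set_option linter.unusedSectionVars false
set_option linter.unnecessarySeqFocus false

noncomputable section

/-- A finite history of a play: the current state together with the
(reversed) list of past steps; an entry `(a, s')` means: the action `a`
was taken from the state `s'` (leading to the next recorded state). -/
abbrev Hist (S A : Type) := S × List (A × S)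

/-- The observation–action sequence of a history. -/
def obsHist {S A Z : Type} (O : S → Z) (h : Hist S A) : Z × List (A × Z) :=
  (O h.1, h.2.map fun p => (p.1, O p.2))

/-- An observation-based (randomized, history-dependent) strategy. -/
structure Strategy (S A Z : Type) [Fintype A] (O : S → Z) where
  act : Hist S A → A → ℝ
  act_nonneg : ∀ h a, 0 ≤ act h a
  act_sum : ∀ h, ∑ a, act h a = 1
  obsBased : ∀ h h', obsHist O h = obsHist O h' → act h = act h'

/-- A partially observable Markov decision process. -/
structure POMDP (S A Z : Type) [Fintype S] [Fintype A] [Fintype Z] where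
  δ : S → A → S → ℝ
  δ_nonneg : ∀ s a s', 0 ≤ δ s a s'
  δ_sum : ∀ s a, ∑ s', δ s a s' = 1
  obs : S → Z
  init : S → ℝ
  init_nonneg : ∀ s, 0 ≤ init s
  init_sum : ∑ s, init s = 1
  init_obs : ∀ s s', 0 < init s → 0 < init s' → obs s = obs s'

namespace POMDP

variable {S A Z : Type} [Fintype S] [Fintype A] [Fintype Z]

/-- The target set `T` consists of absorbing states. -/
def Absorbing (M : POMDP S A Z) (T : Set S) : Prop :=
  ∀ t ∈ T, ∀ a, M.δ t a t = 1

/-- Probability that after `n` steps the process has followed exactly the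
history `(s, l)` (so `l` has length `n`). -/
def hprobAux (M : POMDP S A Z) (σ : Strategy S A Z M.obs) : ℕ → S → List (A × S) → ℝ
  | 0, s, l => if l = [] then M.init s else 0
  | n+1, s, l =>
    match l with
    | [] => 0
    | (a, s') :: rest => hprobAux M σ n s' rest * σ.act (s', rest) a * M.δ s' a s

def hprob (M : POMDP S A Z) (σ : Strategy S A Z M.obs) (n : ℕ) (h : Hist S A) : ℝ :=
  M.hprobAux σ n h.1 h.2

/-- The state sequence of a history visits the set `T`. -/
def visitsT (T : Set S) (h : Hist S A) : Prop :=
  h.1 ∈ T ∨ ∃ p ∈ h.2, p.2 ∈ T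

/-- Probability of reaching `T` within the first `n` steps. -/
def probReachBy (M : POMDP S A Z) (T : Set S) (σ : Strategy S A Z M.obs) (n : ℕ) : ℝ :=
  ∑' h : Hist S A, if visitsT T h then M.hprob σ n h else 0

/-- Probability of the reachability objective `Reach(T)`. -/
def probReach (M : POMDP S A Z) (T : Set S) (σ : Strategy S A Z M.obs) : ℝ :=
  ⨆ n, M.probReachBy T σ n

/-- The strategy `σ` is almost-sure winning for `Reach(T)`. -/
def AlmostSure (M : POMDP S A Z) (T : Set S) (σ : Strategy S A Z M.obs) : Prop :=
  M.probReach T σ = 1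

/-- Accumulated cost along a history. -/
def totalCostAux (c : S → A → ℝ) : S → List (A × S) → ℝ
  | _, [] => 0
  | _, (a, s') :: rest => totalCostAux c s' rest + c s' a

def totalCostH (c : S → A → ℝ) (h : Hist S A) : ℝ := totalCostAux c h.1 h.2

/-- Expected total cost of the first `n` steps, i.e. `E[Total_{n-1}]`
(in particular `E[Total_k] = expTotalSteps M c σ (k+1)`). -/
def expTotalSteps (M : POMDP S A Z) (c : S → A → ℝ) (σ : Strategy S A Z M.obs) (n : ℕ) : ℝ :=
  ∑' h : Hist S A, M.hprob σ n h * totalCostH c h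

/-- The value `Val(σ) = E[Total]` of a strategy, as the limit (limsup) of the
expected costs of the finite prefixes. -/
def Val (M : POMDP S A Z) (c : S → A → ℝ) (σ : Strategy S A Z M.obs) : EReal :=
  Filter.limsup (fun n => ((M.expTotalSteps c σ n : ℝ) : EReal)) Filter.atTop

/-- `optCost`: the infimum of the values of almost-sure winning strategies. -/
def optCost (M : POMDP S A Z) (T : Set S) (c : S → A → ℝ) : EReal :=
  ⨅ σ : {σ : Strategy S A Z M.obs // M.AlmostSure T σ}, M.Val c σ.1

end POMDP

/-- A probabilistic finite automaton. -/
structure PFA (S A : Type) [Fintype S] [Fintype A] where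
  δ : S → A → S → ℝ
  δ_nonneg : ∀ s a s', 0 ≤ δ s a s'
  δ_sum : ∀ s a, ∑ s', δ s a s' = 1
  final : Finset S
  s0 : S

def dirac {X : Type} [DecidableEq X] (x : X) : X → ℝ := fun y => if y = x then 1 else 0

lemma dirac_nonneg {X : Type} [DecidableEq X] (x y : X) : 0 ≤ dirac x y := by
  unfold dirac; split_ifs <;> norm_num

lemma dirac_sum {X : Type} [Fintype X] [DecidableEq X] (x : X) : ∑ y, dirac x y = 1 := by
  simp [dirac]

namespace PFA

variable {S A : Type} [Fintype S] [Fintype A] [DecidableEq S] [DecidableEq A]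

/-- One step of the forward distribution of the PFA. -/
def stepD (P : PFA S A) (d : S → ℝ) (a : A) : S → ℝ := fun s' => ∑ s, d s * P.δ s a s'

/-- Distribution over states after reading the word `w` from `s0`. -/
def wordDist (P : PFA S A) (w : List A) : S → ℝ := w.foldl P.stepD (dirac P.s0)

/-- Probability that the word `w` is accepted (run ends in a final state). -/
def accProb (P : PFA S A) (w : List A) : ℝ := ∑ s ∈ P.final, P.wordDist w s

/-- States of the reduction POMDP: `(s,1)` = `inl (s, true)`, `(s,-1)` = `inl (s, false)`,
`good`, `bad`, `target`, `losing` = `inr 0,1,2,3`. -/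
abbrev RSt (S : Type) := S × Bool ⊕ Fin 4

/-- Actions of the reduction POMDP: the PFA letters, and `# = inr 0`,
`$ = inr 1`, `√ = inr 2`. -/
abbrev RAct (A : Type) := A ⊕ Fin 3

variable (S) in
def stGood : RSt S := Sum.inr 0
variable (S) in
def stBad : RSt S := Sum.inr 1
variable (S) in
def stTarget : RSt S := Sum.inr 2
variable (S) in
def stLosing : RSt S := Sum.inr 3

def embedPos (p : S → ℝ) : RSt S → ℝ
  | Sum.inl (s, true) => p s
  | Sum.inl (_, false) => 0
  | Sum.inr _ => 0

lemma embedPos_nonneg {p : S → ℝ} (hp : ∀ s, 0 ≤ p s) (t : RSt S) : 0 ≤ embedPos p t := by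
  rcases t with ⟨s, _ | _⟩ | i <;> simp [embedPos] <;> exact hp s

lemma embedPos_sum (p : S → ℝ) : ∑ t, embedPos p t = ∑ s, p s := by
  rw [Fintype.sum_sum_type, Fintype.sum_prod_type]
  have h1 : ∀ s : S, ∑ b : Bool, embedPos p (Sum.inl (s, b)) = p s := by
    intro s; rw [Fintype.sum_bool]; simp [embedPos]
  have h2 : ∑ i : Fin 4, embedPos p (Sum.inr i) = 0 := by
    simp [embedPos]
  rw [h2, Finset.sum_congr rfl fun s _ => h1 s, add_zero]

/-- Transition function of the reduction POMDP. -/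
def redδ (P : PFA S A) : RSt S → RAct A → RSt S → ℝ
  | Sum.inl (s, true), Sum.inr j =>
      if j = 1 then dirac (Sum.inl (s, false))
      else if j = 2 then (if s = P.s0 then dirac (stTarget S) else dirac (stLosing S))
      else dirac (stLosing S)
  | Sum.inl (_, true), Sum.inl _ => dirac (stLosing S)
  | Sum.inl (s, false), Sum.inl a => embedPos (P.δ s a)
  | Sum.inl (s, false), Sum.inr j =>
      if j = 0 then (if s ∈ P.final then dirac (stGood S) else dirac (stBad S))
      else dirac (stLosing S)
  | Sum.inr i, Sum.inl _ =>
      if i = 2 then dirac (stTarget S) else dirac (stLosing S)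
  | Sum.inr i, Sum.inr j =>
      if i = 2 then dirac (stTarget S)
      else if i = 3 then dirac (stLosing S)
      else if j = 0 then dirac (Sum.inl (P.s0, true)) else dirac (stLosing S)

lemma redδ_nonneg (P : PFA S A) (st : RSt S) (act : RAct A) (t : RSt S) :
    0 ≤ redδ P st act t := by
  rcases st with ⟨s, _ | _⟩ | i <;> rcases act with a | j <;>
    simp only [redδ] <;> (try split_ifs) <;>
    first
      | exact dirac_nonneg _ _
      | exact embedPos_nonneg (P.δ_nonneg s a) t

lemma redδ_sum (P : PFA S A) (st : RSt S) (act : RAct A) :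
    ∑ t, redδ P st act t = 1 := by
  rcases st with ⟨s, _ | _⟩ | i <;> rcases act with a | j <;>
    simp only [redδ] <;> (try split_ifs) <;>
    first
      | exact dirac_sum _
      | (rw [embedPos_sum]; exact P.δ_sum s a)

/-- The cost function of the reduction POMDP (cost of the source state,
charged on all outgoing transitions). -/
def costRed : RSt S → RAct A → ℝ
  | Sum.inl (_, true), _ => 1
  | Sum.inl (_, false), _ => -1
  | Sum.inr i, _ => if i = 0 then -1 else if i = 1 then 1 else if i = 3 then 1 else 0

/-- The reduction POMDP built from the PFA `P`: single observation,
initial state `(s0, 1)`. -/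
def redPOMDP (P : PFA S A) : POMDP (RSt S) (RAct A) Unit where
  δ := redδ P
  δ_nonneg := redδ_nonneg P
  δ_sum := redδ_sum P
  obs := fun _ => ()
  init := dirac (Sum.inl (P.s0, true))
  init_nonneg := dirac_nonneg _
  init_sum := dirac_sum _
  init_obs := fun _ _ _ _ => rfl

variable (S) in
/-- The target set of the reduction POMDP. -/
def TRed : Set (RSt S) := {stTarget S}

end PFA

/-- The memory state of a finite-memory strategy after a history. -/
def memAfter {S A Z Mem : Type} (O : S → Z) (σu : Mem → Z → A → Mem) (m0 : Mem) :
    S → List (A × S) → Mem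
  | _, [] => m0
  | s, (a, s') :: rest => σu (memAfter O σu m0 s' rest) (O s) a

/-- A strategy is pure finite-memory if it is induced by a deterministic
finite-memory structure `(σu, σn, Mem, m0)`. -/
def IsPureFinMem {S A Z : Type} [Fintype A] (O : S → Z) (σ : Strategy S A Z O) : Prop :=
  ∃ (Mem : Type) (_ : Finite Mem) (σu : Mem → Z → A → Mem) (σn : Mem → A) (m0 : Mem),
    ∀ (h : Hist S A) (a : A),
      σ.act h a = if a = σn (memAfter O σu m0 h.1 h.2) then 1 else 0

/-!
The strategy that plays `√` at once pays `1` and reaches the target surely, so `optCost ≤ 1`.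
For the converse, weigh every state with the potential `ψ` equal to `0` on `(s, 1)`, `-1` on
`(s, -1)`, good and target, and `1` on bad and losing. A step from `q` under action `a` then
changes cost plus potential by `c q a + E[ψ q'] - ψ q ≥ 0` in expectation, except for `#` played
in `(s, -1)`, which drifts by `-1` if `s` is final and by `1` otherwise. Since the POMDP is blind,
the mass on the states `(s, -1)` after any action word is a multiple of the distribution of a run
of the automaton, so this exceptional drift averages to a multiple of `1 - 2 · accProb u ≥ 0`.
Hence `E[Total_n] + E[ψ(s_n)] ≥ ψ(s0, 1) = 0`, and as `ψ ≤ 1` with `ψ(target) = -1`, this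
gives `E[Total_n] ≥ 2 · P(target reached by step n) - 1`, which tends to `1` for an almost-sure
winning strategy.
-/

def listsOfLength (X : Type) [Fintype X] : ℕ → Finset (List X)
  | 0 => {[]}
  | n + 1 => (univ ×ˢ listsOfLength X n).image fun p => p.1 :: p.2

theorem mem_listsOfLength {X : Type} [Fintype X] {n : ℕ} {l : List X} :
    l ∈ listsOfLength X n ↔ l.length = n := by
  induction n generalizing l with
  | zero => simp [listsOfLength, List.length_eq_zero_iff]
  | succ n ih => cases l <;> simp [listsOfLength, ih]

theorem sum_listsOfLength_succ {X M : Type} [Fintype X] [AddCommMonoid M] (n : ℕ)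
    (f : List X → M) :
    ∑ l ∈ listsOfLength X (n + 1), f l = ∑ x, ∑ l ∈ listsOfLength X n, f (x :: l) := by
  rw [listsOfLength, sum_image fun _ _ _ _ h => by simpa [Prod.ext_iff] using h, sum_product]

def histsOfLength (S A : Type) [Fintype S] [Fintype A] (n : ℕ) : Finset (Hist S A) :=
  univ ×ˢ listsOfLength (A × S) n

theorem sum_dirac_mul {X : Type} [Fintype X] [DecidableEq X] (x : X) (f : X → ℝ) :
    ∑ y, dirac x y * f y = f x := by
  simp [dirac]

def Strategy.const {S A Z : Type} [Fintype A] [DecidableEq A] (O : S → Z) (a : A) :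
    Strategy S A Z O where
  act _ := dirac a
  act_nonneg _ := dirac_nonneg a
  act_sum _ := dirac_sum a
  obsBased _ _ _ := rfl

namespace POMDP

variable {S A Z : Type} [Fintype S] [Fintype A] [Fintype Z]
variable (M : POMDP S A Z) (σ : Strategy S A Z M.obs)

theorem hprob_succ_cons (n : ℕ) (q s : S) (a : A) (l : List (A × S)) :
    M.hprob σ (n + 1) (q, (a, s) :: l) = M.hprob σ n (s, l) * σ.act (s, l) a * M.δ s a q :=
  rfl

theorem hprob_nonneg (n : ℕ) (h : Hist S A) : 0 ≤ M.hprob σ n h := by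
  obtain ⟨q, l⟩ := h
  induction n generalizing q l with
  | zero => unfold hprob hprobAux; split_ifs <;> simp [M.init_nonneg]
  | succ n ih =>
    rcases l with _ | ⟨⟨a, s⟩, l⟩
    · exact le_rfl
    · rw [hprob_succ_cons]
      exact mul_nonneg (mul_nonneg (ih s l) (σ.act_nonneg _ a)) (M.δ_nonneg s a q)

theorem hprob_eq_zero_of_length_ne {n : ℕ} {h : Hist S A} (hn : h.2.length ≠ n) :
    M.hprob σ n h = 0 := by
  obtain ⟨q, l⟩ := h
  induction n generalizing q l with
  | zero => simp_all [hprob, hprobAux]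
  | succ n ih =>
    rcases l with _ | ⟨⟨a, s⟩, l⟩
    · rfl
    · rw [hprob_succ_cons, ih s l (by simpa using hn), zero_mul, zero_mul]

theorem tsum_eq_sum_histsOfLength {n : ℕ} {F : Hist S A → ℝ}
    (hF : ∀ h, M.hprob σ n h = 0 → F h = 0) :
    ∑' h, F h = ∑ h ∈ histsOfLength S A n, F h :=
  tsum_eq_sum fun h hh => hF h <| M.hprob_eq_zero_of_length_ne σ fun hn =>
    hh (by simp [histsOfLength, mem_listsOfLength, hn])

theorem sum_hprob_succ_mul (n : ℕ) (F : Hist S A → ℝ) :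
    ∑ h ∈ histsOfLength S A (n + 1), M.hprob σ (n + 1) h * F h =
      ∑ h ∈ histsOfLength S A n, M.hprob σ n h *
        ∑ a, σ.act h a * ∑ q, M.δ h.1 a q * F (q, (a, h.1) :: h.2) := by
  simp only [histsOfLength, sum_product, sum_listsOfLength_succ]
  rw [sum_comm_cycle, sum_comm_cycle, Fintype.sum_prod_type]
  simp only [hprob_succ_cons, mul_sum, mul_assoc]
  conv_rhs => rw [sum_comm_cycle]

theorem sum_hprob (n : ℕ) : ∑ h ∈ histsOfLength S A n, M.hprob σ n h = 1 := by
  induction n with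
  | zero => simp [histsOfLength, listsOfLength, hprob, hprobAux, M.init_sum]
  | succ n ih =>
    simpa [M.δ_sum, σ.act_sum, ih] using M.sum_hprob_succ_mul σ n fun _ => 1

def expState (n : ℕ) (f : S → ℝ) : ℝ :=
  ∑ h ∈ histsOfLength S A n, M.hprob σ n h * f h.1

def expStateAct (n : ℕ) (g : S → A → ℝ) : ℝ :=
  ∑ h ∈ histsOfLength S A n, M.hprob σ n h * ∑ a, σ.act h a * g h.1 a

theorem expState_zero (f : S → ℝ) : M.expState σ 0 f = ∑ s, M.init s * f s := by
  simp [expState, histsOfLength, listsOfLength, hprob, hprobAux]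

theorem expState_succ (n : ℕ) (f : S → ℝ) :
    M.expState σ (n + 1) f = M.expStateAct σ n fun s a => ∑ q, M.δ s a q * f q :=
  M.sum_hprob_succ_mul σ n fun h => f h.1

theorem expTotalSteps_eq_sum (c : S → A → ℝ) (n : ℕ) :
    M.expTotalSteps c σ n = ∑ h ∈ histsOfLength S A n, M.hprob σ n h * totalCostH c h :=
  M.tsum_eq_sum_histsOfLength σ fun h hh => by rw [hh, zero_mul]

theorem expTotalSteps_zero (c : S → A → ℝ) : M.expTotalSteps c σ 0 = 0 := by
  simp [expTotalSteps_eq_sum, histsOfLength, listsOfLength, totalCostH, totalCostAux]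

theorem expTotalSteps_succ (c : S → A → ℝ) (n : ℕ) :
    M.expTotalSteps c σ (n + 1) = M.expTotalSteps c σ n + M.expStateAct σ n c := by
  have hcost (q s : S) (a : A) (l : List (A × S)) :
      totalCostH c (q, (a, s) :: l) = totalCostH c (s, l) + c s a := rfl
  simp only [expTotalSteps_eq_sum, expStateAct, M.sum_hprob_succ_mul, hcost, mul_add,
    sum_add_distrib, ← sum_mul, M.δ_sum, one_mul, σ.act_sum]

def drift (c : S → A → ℝ) (ψ : S → ℝ) (s : S) (a : A) : ℝ :=
  c s a + ∑ q, M.δ s a q * ψ q - ψ s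

theorem expTotalSteps_add_expState_succ (c : S → A → ℝ) (ψ : S → ℝ) (n : ℕ) :
    M.expTotalSteps c σ (n + 1) + M.expState σ (n + 1) ψ =
      M.expTotalSteps c σ n + M.expState σ n ψ + M.expStateAct σ n (M.drift c ψ) := by
  rw [expTotalSteps_succ, expState_succ]
  simp only [expState, expStateAct, drift, mul_add, mul_sub, sum_add_distrib, sum_sub_distrib,
    ← sum_mul, σ.act_sum, one_mul]
  ring

theorem le_expTotalSteps_add_expState {c : S → A → ℝ} {ψ : S → ℝ}
    (hdrift : ∀ n, 0 ≤ M.expStateAct σ n (M.drift c ψ)) (n : ℕ) :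
    ∑ s, M.init s * ψ s ≤ M.expTotalSteps c σ n + M.expState σ n ψ := by
  induction n with
  | zero => rw [expTotalSteps_zero, expState_zero, zero_add]
  | succ n ih => linarith [M.expTotalSteps_add_expState_succ σ c ψ n, hdrift n]

theorem probReachBy_eq_sum (T : Set S) (n : ℕ) :
    M.probReachBy T σ n =
      ∑ h ∈ histsOfLength S A n, M.hprob σ n h * if visitsT T h then 1 else 0 := by
  simp only [mul_ite, mul_one, mul_zero]
  exact M.tsum_eq_sum_histsOfLength σ fun h hh => by simp [hh]

theorem probReachBy_le_one (T : Set S) (n : ℕ) : M.probReachBy T σ n ≤ 1 := by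
  rw [probReachBy_eq_sum]
  refine (sum_le_sum fun h _ => ?_).trans (M.sum_hprob σ n).le
  exact mul_le_of_le_one_right (M.hprob_nonneg σ n h) (by split_ifs <;> norm_num)

theorem visitsT_cons {T : Set S} {h : Hist S A} (hT : visitsT T h) (q : S) (a : A) :
    visitsT T (q, (a, h.1) :: h.2) := by
  rcases hT with hT | ⟨p, hp, hpT⟩
  · exact Or.inr ⟨(a, h.1), List.mem_cons_self .., hT⟩
  · exact Or.inr ⟨p, List.mem_cons_of_mem _ hp, hpT⟩

theorem probReachBy_mono (T : Set S) : Monotone (M.probReachBy T σ) := by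
  refine monotone_nat_of_le_succ fun n => ?_
  rw [probReachBy_eq_sum, probReachBy_eq_sum, M.sum_hprob_succ_mul]
  refine sum_le_sum fun h _ => mul_le_mul_of_nonneg_left ?_ (M.hprob_nonneg σ n h)
  split_ifs with hT
  · simp [visitsT_cons hT, M.δ_sum, σ.act_sum]
  · exact sum_nonneg fun a _ => mul_nonneg (σ.act_nonneg h a) <|
      sum_nonneg fun q _ => mul_nonneg (M.δ_nonneg _ a q) (by split_ifs <;> norm_num)

theorem expState_indicator_le_probReachBy (T : Set S) (n : ℕ) :
    M.expState σ n (fun s => if s ∈ T then 1 else 0) ≤ M.probReachBy T σ n := by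
  rw [probReachBy_eq_sum]
  refine sum_le_sum fun h _ => mul_le_mul_of_nonneg_left ?_ (M.hprob_nonneg σ n h)
  by_cases hT : h.1 ∈ T
  · simp [hT, visitsT]
  · simp only [hT, if_false]
    split_ifs <;> norm_num

theorem tendsto_probReachBy {T : Set S} (hσ : M.AlmostSure T σ) :
    Tendsto (M.probReachBy T σ) atTop (nhds 1) := by
  rw [← show ⨆ n, M.probReachBy T σ n = 1 from hσ]
  exact tendsto_atTop_ciSup (M.probReachBy_mono σ T)
    ⟨1, Set.forall_mem_range.2 (M.probReachBy_le_one σ T)⟩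

variable {M} in
theorem Absorbing.δ_eq_zero {T : Set S} (hT : M.Absorbing T) {t : S} (ht : t ∈ T) (a : A)
    {q : S} (hq : q ≠ t) : M.δ t a q = 0 := by
  have := M.δ_sum t a
  rw [← add_sum_erase _ _ (mem_univ t), hT t ht a, add_eq_left,
    sum_eq_zero_iff_of_nonneg fun q _ => M.δ_nonneg t a q] at this
  exact this q (mem_erase.2 ⟨hq, mem_univ q⟩)

theorem mem_of_visitsT {T : Set S} (hT : M.Absorbing T) {n : ℕ} {h : Hist S A}
    (hh : M.hprob σ n h ≠ 0) (hv : visitsT T h) : h.1 ∈ T := by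
  obtain ⟨q, l⟩ := h
  induction n generalizing q l with
  | zero =>
    rcases l with _ | ⟨p, l⟩
    · simpa [visitsT] using hv
    · exact absurd (M.hprob_eq_zero_of_length_ne σ (by simp)) hh
  | succ n ih =>
    rcases l with _ | ⟨⟨a, s⟩, l⟩
    · exact absurd rfl hh
    rw [hprob_succ_cons] at hh
    rcases hv with hq | ⟨p, hp, hpT⟩
    · exact hq
    have hs : s ∈ T := by
      refine ih s l (left_ne_zero_of_mul (left_ne_zero_of_mul hh)) ?_
      rcases List.mem_cons.1 hp with rfl | hp
      · exact Or.inl hpT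
      · exact Or.inr ⟨p, hp, hpT⟩
    by_contra hqT
    exact right_ne_zero_of_mul hh (hT.δ_eq_zero hs a (ne_of_mem_of_not_mem hs hqT).symm)

theorem expState_le_one_sub_two_mul_probReachBy {T : Set S} (hT : M.Absorbing T) {ψ : S → ℝ}
    (hψ : ∀ s, ψ s ≤ 1) (hψT : ∀ t ∈ T, ψ t = -1) (n : ℕ) :
    M.expState σ n ψ ≤ 1 - 2 * M.probReachBy T σ n := by
  have key : ∀ h ∈ histsOfLength S A n, M.hprob σ n h * ψ h.1 ≤
      M.hprob σ n h - 2 * (M.hprob σ n h * if visitsT T h then 1 else 0) := by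
    intro h _
    by_cases hv : visitsT T h
    · by_cases h0 : M.hprob σ n h = 0
      · simp [h0]
      · rw [hψT _ (M.mem_of_visitsT σ hT h0 hv), if_pos hv]
        linarith
    · rw [if_neg hv, mul_zero, mul_zero, sub_zero]
      exact mul_le_of_le_one_right (M.hprob_nonneg σ n h) (hψ h.1)
  have := sum_le_sum key
  rwa [sum_sub_distrib, ← mul_sum, M.sum_hprob, ← probReachBy_eq_sum] at this

theorem two_mul_probReachBy_sub_one_le_expTotalSteps {T : Set S} (hT : M.Absorbing T)
    {c : S → A → ℝ} {ψ : S → ℝ} (hψ : ∀ s, ψ s ≤ 1) (hψT : ∀ t ∈ T, ψ t = -1)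
    (hψ₀ : 0 ≤ ∑ s, M.init s * ψ s)
    (hdrift : ∀ n, 0 ≤ M.expStateAct σ n (M.drift c ψ)) (n : ℕ) :
    2 * M.probReachBy T σ n - 1 ≤ M.expTotalSteps c σ n := by
  linarith [M.le_expTotalSteps_add_expState σ hdrift n,
    M.expState_le_one_sub_two_mul_probReachBy σ hT hψ hψT n]

theorem one_le_val_of_almostSure {T : Set S} {c : S → A → ℝ} (hσ : M.AlmostSure T σ)
    (hcost : ∀ n, 2 * M.probReachBy T σ n - 1 ≤ M.expTotalSteps c σ n) :
    1 ≤ M.Val c σ := by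
  have hlim : Tendsto (fun n => ((2 * M.probReachBy T σ n - 1 : ℝ) : EReal)) atTop (nhds 1) := by
    have := ((M.tendsto_probReachBy σ hσ).const_mul 2).sub_const 1
    norm_num at this
    exact EReal.tendsto_coe.2 this
  rw [Val, ← hlim.limsup_eq]
  exact limsup_le_limsup (Eventually.of_forall fun n => EReal.coe_le_coe_iff.2 (hcost n))

/-- Like the action part of a history, `w` lists the most recent action first. -/
def wordDist : List A → S → ℝ
  | [] => M.init
  | a :: w => fun q => ∑ s, wordDist w s * M.δ s a q

theorem wordDist_nonneg (w : List A) (q : S) : 0 ≤ M.wordDist w q := by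
  induction w generalizing q with
  | nil => exact M.init_nonneg q
  | cons a w ih => exact sum_nonneg fun s _ => mul_nonneg (ih s) (M.δ_nonneg s a q)

/-- `s₀` only fills the state slots of a history; a blind POMDP does not observe them. -/
def blindAct (s₀ : S) (w : List A) : A → ℝ :=
  σ.act (s₀, w.map fun a => (a, s₀))

def wordWeight (s₀ : S) : List A → ℝ
  | [] => 1
  | a :: w => wordWeight s₀ w * M.blindAct σ s₀ w a

theorem wordWeight_nonneg (s₀ : S) (w : List A) : 0 ≤ M.wordWeight σ s₀ w := by
  induction w with
  | nil => exact zero_le_one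
  | cons a w ih => exact mul_nonneg ih (σ.act_nonneg _ a)

variable {M} in
theorem act_eq_blindAct (hblind : ∀ s s', M.obs s = M.obs s') (s₀ : S) (h : Hist S A) :
    σ.act h = M.blindAct σ s₀ (h.2.map Prod.fst) :=
  σ.obsBased _ _ (by simp [obsHist, hblind _ s₀])

theorem sum_hprob_mul_eq_sum_wordDist (hblind : ∀ s s', M.obs s = M.obs s') (s₀ : S) (n : ℕ)
    (G : List A → S → ℝ) :
    ∑ h ∈ histsOfLength S A n, M.hprob σ n h * G (h.2.map Prod.fst) h.1 =
      ∑ w ∈ listsOfLength A n, M.wordWeight σ s₀ w * ∑ q, M.wordDist w q * G w q := by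
  induction n generalizing G with
  | zero => simp [histsOfLength, listsOfLength, hprob, hprobAux, wordWeight, wordDist]
  | succ n ih =>
    simp only [sum_hprob_succ_mul, List.map_cons, act_eq_blindAct σ hblind s₀]
    rw [ih fun w s => ∑ a, M.blindAct σ s₀ w a * ∑ q, M.δ s a q * G (a :: w) q,
      sum_listsOfLength_succ, sum_comm]
    refine sum_congr rfl fun w _ => ?_
    simp only [wordWeight, wordDist, mul_sum, sum_mul]
    conv_rhs => rw [sum_comm_cycle]
    exact sum_congr rfl fun _ _ => sum_congr rfl fun _ _ => sum_congr rfl fun _ _ => by ring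

theorem expStateAct_nonneg_of_blind (hblind : ∀ s s', M.obs s = M.obs s')
    {D : S → A → ℝ} (hD : ∀ w a, 0 ≤ ∑ q, M.wordDist w q * D q a) (n : ℕ) :
    0 ≤ M.expStateAct σ n D := by
  rcases isEmpty_or_nonempty S with _ | ⟨⟨s₀⟩⟩
  · simp [expStateAct, histsOfLength]
  simp only [expStateAct, act_eq_blindAct σ hblind s₀]
  rw [M.sum_hprob_mul_eq_sum_wordDist σ hblind s₀ n
    fun w q => ∑ a, M.blindAct σ s₀ w a * D q a]
  refine sum_nonneg fun w _ => mul_nonneg (M.wordWeight_nonneg σ s₀ w) ?_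
  simp only [mul_sum]
  rw [sum_comm]
  simp_rw [mul_left_comm (M.wordDist w _), ← mul_sum]
  exact sum_nonneg fun a _ => mul_nonneg (σ.act_nonneg _ a) (hD w a)

variable [DecidableEq A]

theorem expStateAct_const (a : A) (n : ℕ) (g : S → A → ℝ) :
    M.expStateAct (.const M.obs a) n g = M.expState (.const M.obs a) n fun s => g s a := by
  simp [expStateAct, expState, Strategy.const, sum_dirac_mul]

end POMDP

namespace PFA

variable {S A : Type} [Fintype S] [Fintype A] [DecidableEq S] [DecidableEq A] (P : PFA S A)

theorem wordDist_append_singleton (u : List A) (a : A) :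
    P.wordDist (u ++ [a]) = P.stepD (P.wordDist u) a := by
  simp [wordDist, List.foldl_append]

theorem sum_wordDist (u : List A) : ∑ s, P.wordDist u s = 1 := by
  induction u using List.reverseRecOn with
  | nil => exact dirac_sum P.s0
  | append_singleton u a ih =>
    simp only [wordDist_append_singleton, stepD]
    rw [sum_comm]
    simp [← mul_sum, P.δ_sum, ih]

def IsScaledRun (d : S → ℝ) : Prop :=
  ∃ c : ℝ, 0 ≤ c ∧ ∃ u, d = c • P.wordDist u

theorem isScaledRun_zero : P.IsScaledRun 0 :=
  ⟨0, le_rfl, [], (zero_smul ℝ _).symm⟩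

theorem IsScaledRun.stepD {P : PFA S A} {d : S → ℝ} (hd : P.IsScaledRun d) (a : A) :
    P.IsScaledRun (P.stepD d a) := by
  obtain ⟨c, hc, u, rfl⟩ := hd
  refine ⟨c, hc, u ++ [a], funext fun s => ?_⟩
  simp [wordDist_append_singleton, PFA.stepD, mul_sum, mul_assoc]

theorem IsScaledRun.sum_mul_sign_nonneg {P : PFA S A} (hhalf : ∀ u, P.accProb u ≤ 1 / 2)
    {d : S → ℝ} (hd : P.IsScaledRun d) :
    0 ≤ ∑ s, d s * if s ∈ P.final then -1 else 1 := by
  obtain ⟨c, hc, u, rfl⟩ := hd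
  have hsign (s : S) :
      (if s ∈ P.final then (-1 : ℝ) else 1) = 1 - 2 * if s ∈ P.final then 1 else 0 := by
    split_ifs <;> norm_num
  have hsum : ∑ s, P.wordDist u s * (if s ∈ P.final then -1 else 1) = 1 - 2 * P.accProb u := by
    simp only [hsign, mul_sub, mul_one, sum_sub_distrib, sum_wordDist, mul_ite, mul_zero,
      sum_ite_mem, univ_inter, accProb]
    rw [← sum_mul, mul_comm]
  simp only [Pi.smul_apply, smul_eq_mul, mul_assoc, ← mul_sum, hsum]
  exact mul_nonneg hc (by linarith [hhalf u])

theorem redPOMDP_absorbing : (redPOMDP P).Absorbing (TRed S) := by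
  rintro t rfl (a | j) <;> simp [redPOMDP, redδ, stTarget, dirac]

section

attribute [local simp] POMDP.wordDist POMDP.drift redPOMDP redδ dirac embedPos stGood stBad
  stTarget stLosing ite_apply Fintype.sum_prod_type Fin.sum_univ_four

theorem isScaledRun_wordDist (w : List (RAct A)) (b : Bool) :
    P.IsScaledRun fun s => (redPOMDP P).wordDist w (Sum.inl (s, b)) := by
  induction w generalizing b with
  | nil =>
    cases b
    · convert P.isScaledRun_zero using 1
      funext s
      simp
    · exact ⟨1, zero_le_one, [], funext fun s => by simp [wordDist]⟩
  | cons a w ih =>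
    have hν := (redPOMDP P).wordDist_nonneg w
    rcases a with x | j
    · cases b
      · convert P.isScaledRun_zero using 1
        funext s
        simp
      · convert (ih false).stepD x using 1
        funext s
        simp [stepD]
    · fin_cases j <;> cases b
      · convert P.isScaledRun_zero using 1
        funext s
        simp
      · refine ⟨_, add_nonneg (hν (stGood S)) (hν (stBad S)), [], funext fun s => ?_⟩
        simp [wordDist, ite_add_ite]
      · convert ih true using 1
        funext s
        simp
      all_goals
        convert P.isScaledRun_zero using 1
        funext s
        simp

def potential : RSt S → ℝ
  | Sum.inl (_, true) => 0
  | Sum.inl (_, false) => -1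
  | Sum.inr i => ![-1, 1, -1, 1] i

theorem potential_le_one (q : RSt S) : potential q ≤ 1 := by
  rcases q with ⟨s, _ | _⟩ | i
  all_goals try fin_cases i
  all_goals simp [potential]

theorem drift_nonneg {q : RSt S} {a : RAct A}
    (h : a ≠ Sum.inr 0 ∨ ∀ s, q ≠ Sum.inl (s, false)) :
    0 ≤ (redPOMDP P).drift costRed potential q a := by
  rcases q with ⟨s, _ | _⟩ | i <;> rcases a with x | j
  all_goals try fin_cases i
  all_goals try fin_cases j
  all_goals simp [costRed, potential] at h ⊢
  split_ifs <;> norm_num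

theorem drift_inl_false_hash (s : S) :
    (redPOMDP P).drift costRed potential (Sum.inl (s, false)) (Sum.inr 0) =
      if s ∈ P.final then -1 else 1 := by
  split_ifs <;> simp [costRed, potential, *]

end

theorem sum_wordDist_mul_drift_nonneg (hhalf : ∀ u, P.accProb u ≤ 1 / 2) (w : List (RAct A))
    (a : RAct A) :
    0 ≤ ∑ q, (redPOMDP P).wordDist w q * (redPOMDP P).drift costRed potential q a := by
  have hν := (redPOMDP P).wordDist_nonneg w
  by_cases ha : a = Sum.inr 0
  · subst ha
    simp only [Fintype.sum_sum_type, Fintype.sum_prod_type, Fintype.sum_bool, sum_add_distrib,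
      drift_inl_false_hash]
    have hterm (q : RSt S) (hq : ∀ s, q ≠ Sum.inl (s, false)) :=
      mul_nonneg (hν q) (P.drift_nonneg (a := Sum.inr 0) (Or.inr hq))
    have htrue := sum_nonneg fun s (_ : s ∈ univ) => hterm (Sum.inl (s, true)) (by simp)
    have hinr := sum_nonneg fun i (_ : i ∈ univ) => hterm (Sum.inr i) (by simp)
    linarith [(P.isScaledRun_wordDist w false).sum_mul_sign_nonneg hhalf]
  · exact sum_nonneg fun q _ => mul_nonneg (hν q) (P.drift_nonneg (Or.inl ha))

theorem one_le_val_of_accProb_le_half (hhalf : ∀ u, P.accProb u ≤ 1 / 2)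
    (σ : Strategy (RSt S) (RAct A) Unit (redPOMDP P).obs)
    (hσ : (redPOMDP P).AlmostSure (TRed S) σ) :
    1 ≤ (redPOMDP P).Val costRed σ := by
  refine (redPOMDP P).one_le_val_of_almostSure σ hσ fun n => ?_
  refine (redPOMDP P).two_mul_probReachBy_sub_one_le_expTotalSteps σ (redPOMDP_absorbing P)
    (ψ := potential) ?_ ?_ ?_ (fun n => ?_) n
  · exact potential_le_one
  · rintro t rfl
    rfl
  · simp [redPOMDP, sum_dirac_mul, potential]
  · exact (redPOMDP P).expStateAct_nonneg_of_blind σ (fun _ _ => rfl)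
      (P.sum_wordDist_mul_drift_nonneg hhalf) n

def sqrtStrat : Strategy (RSt S) (RAct A) Unit (redPOMDP P).obs :=
  .const _ (Sum.inr 2)

theorem expState_sqrtStrat (n : ℕ) (f : RSt S → ℝ) :
    (redPOMDP P).expState (sqrtStrat P) (n + 1) f = f (stTarget S) := by
  induction n generalizing f with
  | zero =>
    rw [sqrtStrat, POMDP.expState_succ, POMDP.expStateAct_const, POMDP.expState_zero]
    simp [redPOMDP, sum_dirac_mul, redδ, -Fintype.sum_sum_type]
  | succ n ih =>
    rw [sqrtStrat, POMDP.expState_succ, POMDP.expStateAct_const, ← sqrtStrat, ih]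
    simp [redPOMDP, sum_dirac_mul, redδ, stTarget, -Fintype.sum_sum_type]

theorem almostSure_sqrtStrat : (redPOMDP P).AlmostSure (TRed S) (sqrtStrat P) := by
  have hle := (redPOMDP P).probReachBy_le_one (sqrtStrat P) (TRed S)
  have h1 : 1 ≤ (redPOMDP P).probReachBy (TRed S) (sqrtStrat P) 1 := by
    have := (redPOMDP P).expState_indicator_le_probReachBy (sqrtStrat P) (TRed S) 1
    rwa [expState_sqrtStrat, if_pos (show stTarget S ∈ TRed S from rfl)] at this
  exact le_antisymm (ciSup_le hle) (le_ciSup_of_le ⟨1, Set.forall_mem_range.2 hle⟩ 1 h1)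

theorem expTotalSteps_sqrtStrat (n : ℕ) :
    (redPOMDP P).expTotalSteps costRed (sqrtStrat P) (n + 1) = 1 := by
  induction n with
  | zero =>
    rw [sqrtStrat, POMDP.expTotalSteps_succ, POMDP.expStateAct_const, POMDP.expTotalSteps_zero,
      POMDP.expState_zero]
    simp [redPOMDP, sum_dirac_mul, costRed]
  | succ n ih =>
    rw [sqrtStrat, POMDP.expTotalSteps_succ, POMDP.expStateAct_const, ← sqrtStrat, ih,
      expState_sqrtStrat]
    simp [costRed, stTarget]

theorem val_sqrtStrat : (redPOMDP P).Val costRed (sqrtStrat P) = 1 := by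
  rw [POMDP.Val, limsup_congr (eventually_atTop.2 ⟨1, fun n hn => ?_⟩), limsup_const]
  obtain ⟨m, rfl⟩ := Nat.exists_eq_add_of_le' hn
  rw [expTotalSteps_sqrtStrat]
  rfl

end PFA

/-- If no word is accepted by the PFA `P` with probability
strictly greater than `1/2`, then the optimal cost of the reduction POMDP
equals `1`. -/
theorem optCost_eq_one_of_no_accProb_gt_half
    {S A : Type} [Fintype S] [Fintype A] [DecidableEq S] [DecidableEq A]
    (P : PFA S A) (hw : ¬ ∃ w : List A, 1 / 2 < P.accProb w) :
    (PFA.redPOMDP P).optCost (PFA.TRed S) PFA.costRed = (1 : EReal) := by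
  have hhalf (u : List A) : P.accProb u ≤ 1 / 2 := not_lt.1 fun hu => hw ⟨u, hu⟩
  refine le_antisymm ?_ (le_iInf fun σ => P.one_le_val_of_accProb_le_half hhalf σ.1 σ.2)
  exact iInf_le_of_le ⟨P.sqrtStrat, P.almostSure_sqrtStrat⟩ P.val_sqrtStrat.le
end
end

section
/- For every POMDP G with absorbing target set T and every belief-support U ∈ BeliefWin(G,T), the set of allowed actions Allow(U) is nonempty. -/
open Finset Filter
open scoped Classical

set_option linter.unusedSectionVars false

noncomputable section

namespace POMDP

variable {S A Z : Type} [Fintype S] [Fintype A] [Fintype Z]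

/-- Uniform distribution over a finite set of states. -/
def uniformS (U : Finset S) : S → ℝ := fun s => if s ∈ U then ((U.card : ℝ))⁻¹ else 0

lemma uniformS_nonneg (U : Finset S) (s : S) : 0 ≤ uniformS U s := by
  unfold uniformS; split_ifs <;> positivity

lemma uniformS_sum (U : Finset S) (h : U.Nonempty) : ∑ s, uniformS U s = 1 := by
  unfold uniformS
  rw [Finset.sum_ite_mem, Finset.univ_inter, Finset.sum_const, nsmul_eq_mul,
    mul_inv_cancel₀]
  exact_mod_cast Finset.card_ne_zero.mpr h

lemma uniformS_mem {U : Finset S} {s : S} (h : 0 < uniformS U s) : s ∈ U := by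
  by_contra hc; simp [uniformS, hc] at h

/-- The POMDP `M` with the initial distribution replaced by the uniform
distribution over `U`. -/
def reinit (M : POMDP S A Z) (U : Finset S) (hU : U.Nonempty)
    (hobs : ∀ s ∈ U, ∀ s' ∈ U, M.obs s = M.obs s') : POMDP S A Z :=
  { M with
    init := uniformS U
    init_nonneg := uniformS_nonneg U
    init_sum := uniformS_sum U hU
    init_obs := fun s s' hs hs' => hobs s (uniformS_mem hs) s' (uniformS_mem hs') }

/-- The POMDP `M` with the initial distribution replaced by the Dirac
distribution at `s0`. -/
def resetDirac (M : POMDP S A Z) (s0 : S) : POMDP S A Z :=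
  { M with
    init := fun s => if s = s0 then 1 else 0
    init_nonneg := by intro s; split_ifs <;> norm_num
    init_sum := by simp
    init_obs := by
      intro s s' hs hs'
      have h1 : s = s0 := by by_contra hc; simp [hc] at hs
      have h2 : s' = s0 := by by_contra hc; simp [hc] at hs'
      rw [h1, h2] }

/-- The set of almost-sure winning belief-supports: those `U` from which
(with the uniform initial distribution on `U`) some strategy wins
`Reach(T)` almost-surely. -/
def BeliefWin (M : POMDP S A Z) (T : Set S) : Set (Finset S) :=
  {U | ∃ (hU : U.Nonempty) (hobs : ∀ s ∈ U, ∀ s' ∈ U, M.obs s = M.obs s'),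
      ∃ σ : Strategy S A Z M.obs, (M.reinit U hU hobs).AlmostSure T σ}

/-- Belief-support update. -/
def updateF (M : POMDP S A Z) (U : Finset S) (z : Z) (a : A) : Finset S :=
  univ.filter (fun t => M.obs t = z ∧ ∃ s ∈ U, 0 < M.δ s a t)

/-- Allowed actions at a belief-support `U`. -/
def AllowSet (M : POMDP S A Z) (T : Set S) (U : Finset S) : Set A :=
  {a | ∀ z, (M.updateF U z a).Nonempty → M.updateF U z a ∈ M.BeliefWin T}

def allowFin (M : POMDP S A Z) (T : Set S) (U : Finset S) : Finset A :=
  univ.filter (· ∈ M.AllowSet T U)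

/-- The support of the initial distribution, as a belief-support. -/
def suppInitF (M : POMDP S A Z) : Finset S := univ.filter (fun s => 0 < M.init s)

/-- Belief-support after a history, starting from the initial belief-support `U0`. -/
def beliefOfFromAux (M : POMDP S A Z) (U0 : Finset S) : S → List (A × S) → Finset S
  | s, [] => U0.filter (fun t => M.obs t = M.obs s)
  | s, (a, s') :: rest => M.updateF (M.beliefOfFromAux U0 s' rest) (M.obs s) a

def beliefOfFrom (M : POMDP S A Z) (U0 : Finset S) (h : Hist S A) : Finset S :=
  M.beliefOfFromAux U0 h.1 h.2

/-- Belief-support after a history (with the initial belief-support being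
the support of the initial distribution). -/
def beliefOf (M : POMDP S A Z) (h : Hist S A) : Finset S :=
  M.beliefOfFrom M.suppInitF h

lemma beliefOfFromAux_obs (M : POMDP S A Z) (U0 : Finset S) :
    ∀ (l l' : List (A × S)) (s s' : S),
      l.map (fun p => (p.1, M.obs p.2)) = l'.map (fun p => (p.1, M.obs p.2)) →
      M.obs s = M.obs s' →
      M.beliefOfFromAux U0 s l = M.beliefOfFromAux U0 s' l'
  | [], [], s, s', _, hs => by simp [beliefOfFromAux, hs]
  | [], (_ :: _), _, _, hmap, _ => by simp at hmap
  | (_ :: _), [], _, _, hmap, _ => by simp at hmap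
  | ((a, t) :: r), ((a', t') :: r'), s, s', hmap, hs => by
      simp only [List.map_cons, List.cons.injEq, Prod.mk.injEq] at hmap
      obtain ⟨⟨ha, ht⟩, hr⟩ := hmap
      simp only [beliefOfFromAux]
      rw [M.beliefOfFromAux_obs U0 r r' t t' hr ht, hs, ha]

/-- Uniform distribution over a finite set of actions. -/
def uniformA (F : Finset A) : A → ℝ := fun a => if a ∈ F then ((F.card : ℝ))⁻¹ else 0

lemma uniformA_nonneg (F : Finset A) (a : A) : 0 ≤ uniformA F a := by
  unfold uniformA; split_ifs <;> positivity

lemma uniformA_sum (F : Finset A) (h : F.Nonempty) : ∑ a, uniformA F a = 1 := by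
  unfold uniformA
  rw [Finset.sum_ite_mem, Finset.univ_inter, Finset.sum_const, nsmul_eq_mul,
    mul_inv_cancel₀]
  exact_mod_cast Finset.card_ne_zero.mpr h

/-- The action distribution of `σ_Allow` (with initial belief-support `U0`):
uniform over the allowed actions of the current belief-support (with a
uniform fallback where no action is allowed). -/
def actAllowFrom (M : POMDP S A Z) (T : Set S) (U0 : Finset S) (h : Hist S A) : A → ℝ :=
  if (M.allowFin T (M.beliefOfFrom U0 h)).Nonempty
  then uniformA (M.allowFin T (M.beliefOfFrom U0 h))
  else uniformA (univ : Finset A)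

/-- The belief-support based strategy `σ_Allow` (tracking beliefs from `U0`). -/
def stratAllowFrom [Nonempty A] (M : POMDP S A Z) (T : Set S) (U0 : Finset S) :
    Strategy S A Z M.obs where
  act := M.actAllowFrom T U0
  act_nonneg := by
    intro h a; unfold actAllowFrom; split_ifs <;> exact uniformA_nonneg _ _
  act_sum := by
    intro h; unfold actAllowFrom; split_ifs with hne
    · exact uniformA_sum _ hne
    · exact uniformA_sum _ univ_nonempty
  obsBased := by
    intro h h' hobs
    have : M.beliefOfFrom U0 h = M.beliefOfFrom U0 h' := by
      unfold beliefOfFrom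
      exact M.beliefOfFromAux_obs U0 h.2 h'.2 h.1 h'.1
        (congrArg Prod.snd hobs) (congrArg Prod.fst hobs)
    unfold actAllowFrom
    rw [this]

/-- `σ_Allow`. -/
def stratAllow [Nonempty A] (M : POMDP S A Z) (T : Set S) : Strategy S A Z M.obs :=
  M.stratAllowFrom T M.suppInitF

/-- `T_Allow(s, U)`: the expected total cost of `σ_Allow` started in the
state `s` with the initial belief-support `U`. -/
def TAllow [Nonempty A] (M : POMDP S A Z) (T : Set S) (c : S → A → ℝ) (s : S) (U : Finset S) :
    EReal :=
  (M.resetDirac s).Val c (M.stratAllowFrom T U)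

/-- `U_Allow`: the maximal expected total cost of `σ_Allow` over all
almost-sure winning belief-supports `U` and states `s ∈ U`. -/
def UAllow [Nonempty A] (M : POMDP S A Z) (T : Set S) (c : S → A → ℝ) : EReal :=
  ⨆ U ∈ M.BeliefWin T, ⨆ s ∈ U, M.TAllow T c s U

end POMDP

namespace POMDP

variable {S A Z : Type} [Fintype S] [Fintype A] [Fintype Z]

/-- Normalization of a nonnegative function into a distribution. -/
def normalize (f : S → ℝ) : S → ℝ := fun t => f t / ∑ u, f u

/-- Support of an information state. -/
def suppF (b : S → ℝ) : Finset S := univ.filter (fun s => b s ≠ 0)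

/-- The information state (posterior distribution) after a history. -/
def infoOfAux (M : POMDP S A Z) : S → List (A × S) → S → ℝ
  | s, [] => normalize (fun t => if M.obs t = M.obs s then M.init t else 0)
  | s, (a, s') :: rest =>
      normalize (fun t => if M.obs t = M.obs s then ∑ u, M.infoOfAux s' rest u * M.δ u a t else 0)

def infoOf (M : POMDP S A Z) (h : Hist S A) : S → ℝ := M.infoOfAux h.1 h.2

lemma infoOfAux_obs (M : POMDP S A Z) :
    ∀ (l l' : List (A × S)) (s s' : S),
      l.map (fun p => (p.1, M.obs p.2)) = l'.map (fun p => (p.1, M.obs p.2)) →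
      M.obs s = M.obs s' →
      M.infoOfAux s l = M.infoOfAux s' l'
  | [], [], s, s', _, hs => by simp [infoOfAux, hs]
  | [], (_ :: _), _, _, hmap, _ => by simp at hmap
  | (_ :: _), [], _, _, hmap, _ => by simp at hmap
  | ((a, t) :: r), ((a', t') :: r'), s, s', hmap, hs => by
      simp only [List.map_cons, List.cons.injEq, Prod.mk.injEq] at hmap
      obtain ⟨⟨ha, ht⟩, hr⟩ := hmap
      simp only [infoOfAux]
      rw [M.infoOfAux_obs r r' t t' hr ht, hs, ha]

/-- Expected one-step cost `c'(b,a)` at an information state. -/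
def cinfo (c : S → A → ℝ) (b : S → ℝ) (a : A) : ℝ := ∑ s, b s * c s a

/-- Probability of observing `z` after playing `a` at information state `b`. -/
def obsProb (M : POMDP S A Z) (b : S → ℝ) (a : A) (z : Z) : ℝ :=
  ∑ t, if M.obs t = z then ∑ u, b u * M.δ u a t else 0

/-- Bayesian update of the information state `b` under action `a` and
observation `z`. -/
def postInfo (M : POMDP S A Z) (b : S → ℝ) (a : A) (z : Z) : S → ℝ :=
  normalize (fun t => if M.obs t = z then ∑ u, b u * M.δ u a t else 0)

/-- The allowed-action-restricted finite-horizon value iteration `V*_n`. -/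
def Vstar (M : POMDP S A Z) (T : Set S) (c : S → A → ℝ) : ℕ → (S → ℝ) → ℝ
  | 0, _ => 0
  | n+1, b =>
    if h : (M.allowFin T (suppF b)).Nonempty then
      (M.allowFin T (suppF b)).inf' h
        (fun a => cinfo c b a + ∑ z, M.obsProb b a z * M.Vstar T c n (M.postInfo b a z))
    else 0

/-- An allowed action attaining the minimum of the value iteration with
`n` steps remaining at information state `b`. -/
def foAct [Nonempty A] (M : POMDP S A Z) (T : Set S) (c : S → A → ℝ) : ℕ → (S → ℝ) → A
  | 0, _ => Classical.arbitrary A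
  | n+1, b =>
    if h : (M.allowFin T (suppF b)).Nonempty then
      Classical.choose (Finset.exists_mem_eq_inf' h
        (fun a => cinfo c b a + ∑ z, M.obsProb b a z * M.Vstar T c n (M.postInfo b a z)))
    else Classical.arbitrary A

/-- The action distribution of the finite-horizon optimal strategy `σFO_k`. -/
def actFO [Nonempty A] (M : POMDP S A Z) (T : Set S) (c : S → A → ℝ) (k : ℕ) (h : Hist S A) :
    A → ℝ :=
  fun a => if a = M.foAct T c (k - h.2.length) (M.infoOf h) then 1 else 0

lemma length_eq_of_obsHist {h h' : Hist S A} {O : S → Z} (he : obsHist O h = obsHist O h') :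
    h.2.length = h'.2.length := by
  have := congrArg (fun x => (Prod.snd x).length) he
  simpa [obsHist] using this

/-- The (allowed-action-restricted) finite-horizon optimal strategy `σFO_k`. -/
def stratFO [Nonempty A] (M : POMDP S A Z) (T : Set S) (c : S → A → ℝ) (k : ℕ) :
    Strategy S A Z M.obs where
  act := M.actFO T c k
  act_nonneg := by intro h a; unfold actFO; split_ifs <;> norm_num
  act_sum := by intro h; unfold actFO; simp
  obsBased := by
    intro h h' hobs
    have hlen : h.2.length = h'.2.length := length_eq_of_obsHist hobs
    have hinfo : M.infoOf h = M.infoOf h' := by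
      unfold infoOf
      exact M.infoOfAux_obs h.2 h'.2 h.1 h'.1
        (congrArg Prod.snd hobs) (congrArg Prod.fst hobs)
    unfold actFO
    rw [hlen, hinfo]

/-- The strategy `σ*_k`: play `σFO_k` for the first `k` steps, then `σ_Allow`. -/
def stratStar [Nonempty A] (M : POMDP S A Z) (T : Set S) (c : S → A → ℝ) (k : ℕ) :
    Strategy S A Z M.obs where
  act := fun h =>
    if h.2.length < k then M.actFO T c k h else M.actAllowFrom T M.suppInitF h
  act_nonneg := by
    intro h a; split_ifs with hl
    · exact (M.stratFO T c k).act_nonneg h a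
    · exact (M.stratAllowFrom T M.suppInitF).act_nonneg h a
  act_sum := by
    intro h; split_ifs with hl
    · exact (M.stratFO T c k).act_sum h
    · exact (M.stratAllowFrom T M.suppInitF).act_sum h
  obsBased := by
    intro h h' hobs
    have hlen : h.2.length = h'.2.length := length_eq_of_obsHist hobs
    rw [hlen]
    split_ifs with hl
    · exact (M.stratFO T c k).obsBased h h' hobs
    · exact (M.stratAllowFrom T M.suppInitF).obsBased h h' hobs

/-- `α_k`: the probability that `T` is not reached within the first `k`
steps when playing `σ*_k`. -/
def alphaK [Nonempty A] (M : POMDP S A Z) (T : Set S) (c : S → A → ℝ) (k : ℕ) : ℝ :=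
  1 - M.probReachBy T (M.stratStar T c k) k

end POMDP

/-! Let `σ` win almost surely from `U`, and let `a` be an action that `σ` plays with positive
probability in the first step (the same for all states of `U`, which share an observation).
From a successor belief `V = Update(U, z, a)`, play `σ` as if `a` had just been played from a
fixed `s₀ ∈ U`. Every history from `t ∈ V` that avoids `T` extends, by a first step `q -a→ t`
with `q ∈ U`, to a history of `σ` from `U`; it still avoids `T`, since `q ∈ T` would force
`t = q` by absorption, and its probability drops at most by a factor depending on `t` only. So the probability of avoiding
`T` for `n` steps from `V` is at most a constant times that of avoiding it for `n + 1` steps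
from `U`, which tends to `0`. -/

lemma Strategy.exists_act_pos {S A Z : Type} [Fintype A] {O : S → Z} (σ : Strategy S A Z O)
    (h : Hist S A) : ∃ a, 0 < σ.act h a := by
  by_contra hneg
  simp only [not_exists, not_lt] at hneg
  linarith [sum_nonpos fun a (_ : a ∈ univ) => hneg a, σ.act_sum h]

namespace POMDP

variable {S A Z : Type} [Fintype S] [Fintype A] [Fintype Z]

def listsOfLength : ℕ → Finset (List (A × S))
  | 0 => {[]}
  | n + 1 => ((univ : Finset (A × S)) ×ˢ listsOfLength n).image fun p => p.1 :: p.2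

lemma mem_listsOfLength : ∀ {n : ℕ} {l : List (A × S)}, l ∈ listsOfLength n ↔ l.length = n
  | 0, l => by simp [listsOfLength]
  | n + 1, [] => by simp [listsOfLength]
  | n + 1, p :: r => by simp [listsOfLength, mem_listsOfLength]

lemma sum_listsOfLength_succ {β : Type*} [AddCommMonoid β] (n : ℕ) (g : List (A × S) → β) :
    ∑ l ∈ listsOfLength (n + 1), g l = ∑ p : A × S, ∑ r ∈ listsOfLength n, g (p :: r) := by
  rw [listsOfLength, sum_image (by simp), sum_product]

def histsOfLength (n : ℕ) : Finset (Hist S A) := univ ×ˢ listsOfLength n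

lemma mem_histsOfLength {n : ℕ} {h : Hist S A} : h ∈ histsOfLength n ↔ h.2.length = n := by
  simp [histsOfLength, mem_listsOfLength]

def histStart : S → List (A × S) → S
  | s, [] => s
  | _, (_, s') :: r => histStart s' r

lemma visitsT_cons_s7 {T : Set S} {s : S} {p : A × S} {r : List (A × S)}
    (h : visitsT T (p.2, r)) : visitsT T (s, p :: r) := by
  rcases h with h | ⟨q, hq, hqT⟩
  · exact Or.inr ⟨p, List.mem_cons_self, h⟩
  · exact Or.inr ⟨q, List.mem_cons_of_mem _ hq, hqT⟩

lemma visitsT_of_histStart_mem {T : Set S} :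
    ∀ {s : S} {l : List (A × S)}, histStart s l ∈ T → visitsT T (s, l)
  | _, [], h => Or.inl h
  | _, (_, _) :: _, h => visitsT_cons_s7 (visitsT_of_histStart_mem h)

lemma visitsT_append_singleton {T : Set S} {s : S} {l : List (A × S)} {p : A × S} :
    visitsT T (s, l ++ [p]) ↔ visitsT T (s, l) ∨ p.2 ∈ T := by
  simp [visitsT, or_assoc]

lemma hprobAux_succ_cons (M : POMDP S A Z) (σ : Strategy S A Z M.obs) (n : ℕ) (s : S)
    (p : A × S) (r : List (A × S)) :
    M.hprobAux σ (n + 1) s (p :: r) = M.hprobAux σ n p.2 r * σ.act (p.2, r) p.1 * M.δ p.2 p.1 s :=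
  rfl

lemma hprobAux_nonneg (M : POMDP S A Z) (σ : Strategy S A Z M.obs) :
    ∀ (n : ℕ) (s : S) (l : List (A × S)), 0 ≤ M.hprobAux σ n s l
  | 0, s, l => by
      simp only [hprobAux]
      split_ifs
      exacts [M.init_nonneg s, le_rfl]
  | n + 1, _, [] => le_rfl
  | n + 1, s, p :: r => by
      rw [hprobAux_succ_cons]
      exact mul_nonneg (mul_nonneg (hprobAux_nonneg M σ n p.2 r) (σ.act_nonneg _ _))
        (M.δ_nonneg _ _ _)

lemma hprobAux_eq_zero_of_length_ne (M : POMDP S A Z) (σ : Strategy S A Z M.obs) :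
    ∀ {n : ℕ} {s : S} {l : List (A × S)}, l.length ≠ n → M.hprobAux σ n s l = 0
  | 0, _, l, h => if_neg (by rintro rfl; exact h rfl)
  | n + 1, _, [], _ => rfl
  | n + 1, _, _ :: _, h => by
      rw [hprobAux_succ_cons, hprobAux_eq_zero_of_length_ne M σ (by simpa using h),
        zero_mul, zero_mul]

@[simp]
lemma resetDirac_δ (M : POMDP S A Z) (t : S) : (M.resetDirac t).δ = M.δ := rfl

lemma hprobAux_eq_init_mul_resetDirac (M : POMDP S A Z) (σ : Strategy S A Z M.obs) :
    ∀ (n : ℕ) (s : S) (l : List (A × S)),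
      M.hprobAux σ n s l = M.init (histStart s l) * (M.resetDirac (histStart s l)).hprobAux σ n s l
  | 0, s, [] => by simp [hprobAux, histStart, resetDirac]
  | 0, _, _ :: _ => by simp [hprobAux]
  | n + 1, _, [] => by simp [hprobAux]
  | n + 1, s, (a, s') :: r => by
      simp only [hprobAux, histStart, resetDirac_δ]
      rw [hprobAux_eq_init_mul_resetDirac M σ n s' r]
      ring

def shiftStrat {O : S → Z} (σ : Strategy S A Z O) (a₀ : A) (s₀ : S) : Strategy S A Z O where
  act h := σ.act (h.1, h.2 ++ [(a₀, s₀)])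
  act_nonneg _ _ := σ.act_nonneg _ _
  act_sum _ := σ.act_sum _
  obsBased h h' he := σ.obsBased _ _ (by
    simp only [obsHist, Prod.mk.injEq] at he ⊢
    simp [he.1, ← he.2])

lemma shiftStrat_eq_of_obs_eq {O : S → Z} (σ : Strategy S A Z O) (a₀ : A) {s₀ s₁ : S}
    (hs : O s₀ = O s₁) : shiftStrat σ a₀ s₀ = shiftStrat σ a₀ s₁ := by
  simp only [shiftStrat, Strategy.mk.injEq]
  funext h
  exact σ.obsBased (h.1, h.2 ++ [(a₀, s₀)]) (h.1, h.2 ++ [(a₀, s₁)]) (by simp [obsHist, hs])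

lemma hprobAux_append_singleton (M : POMDP S A Z) (σ : Strategy S A Z M.obs) (a₀ : A) (s₀ : S) :
    ∀ (n : ℕ) (s : S) (l : List (A × S)),
      M.hprobAux σ (n + 1) s (l ++ [(a₀, s₀)]) =
        M.init s₀ * σ.act (s₀, []) a₀ * M.δ s₀ a₀ (histStart s l) *
          (M.resetDirac (histStart s l)).hprobAux (shiftStrat σ a₀ s₀) n s l
  | 0, s, [] => by simp [hprobAux, histStart, resetDirac]
  | n + 1, _, [] => by simp [hprobAux]
  | 0, _, _ :: _ => by simp [hprobAux]
  | n + 1, s, (a, s') :: r => by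
      rw [List.cons_append, hprobAux_succ_cons, hprobAux_append_singleton M σ a₀ s₀ n s' r]
      simp only [hprobAux, histStart, resetDirac_δ, shiftStrat]
      ring

lemma sum_histsOfLength_succ {β : Type*} [AddCommMonoid β] (n : ℕ) (g : Hist S A → β) :
    ∑ h ∈ histsOfLength (n + 1), g h =
      ∑ s : S, ∑ p : A × S, ∑ r ∈ listsOfLength n, g (s, p :: r) := by
  simp only [histsOfLength, sum_product, sum_listsOfLength_succ]

/-- The last step of a history sums out, as `δ` and `σ.act` are probability distributions. -/
lemma sum_mul_hprob_succ (M : POMDP S A Z) (σ : Strategy S A Z M.obs) (n : ℕ)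
    (g : Hist S A → ℝ) :
    ∑ s : S, ∑ p : A × S, ∑ r ∈ listsOfLength n, g (p.2, r) * M.hprob σ (n + 1) (s, p :: r) =
      ∑ h ∈ histsOfLength n, g h * M.hprob σ n h := by
  simp only [hprob, hprobAux_succ_cons, histsOfLength, sum_product]
  have sum_δ : ∀ p : A × S, ∑ s, ∑ r ∈ listsOfLength n,
      g (p.2, r) * (M.hprobAux σ n p.2 r * σ.act (p.2, r) p.1 * M.δ p.2 p.1 s) =
        ∑ r ∈ listsOfLength n, g (p.2, r) * M.hprobAux σ n p.2 r * σ.act (p.2, r) p.1 := by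
    intro p
    rw [sum_comm]
    simp only [← mul_assoc, ← mul_sum, M.δ_sum, mul_one]
  have sum_act : ∀ s', ∑ a : A, ∑ r ∈ listsOfLength n,
      g (s', r) * M.hprobAux σ n s' r * σ.act (s', r) a =
        ∑ r ∈ listsOfLength n, g (s', r) * M.hprobAux σ n s' r := by
    intro s'
    rw [sum_comm]
    simp only [← mul_sum, σ.act_sum, mul_one]
  rw [sum_comm]
  simp only [sum_δ, Fintype.sum_prod_type]
  rw [sum_comm]
  simp only [sum_act]

lemma sum_hprob_histsOfLength (M : POMDP S A Z) (σ : Strategy S A Z M.obs) :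
    ∀ n : ℕ, ∑ h ∈ histsOfLength n, M.hprob σ n h = 1
  | 0 => by simp [histsOfLength, listsOfLength, hprob, hprobAux, M.init_sum]
  | n + 1 => by
      rw [sum_histsOfLength_succ]
      simpa using (sum_mul_hprob_succ M σ n 1).trans (by simpa using sum_hprob_histsOfLength M σ n)

def probAvoidBy (M : POMDP S A Z) (T : Set S) (σ : Strategy S A Z M.obs) (n : ℕ) : ℝ :=
  ∑ h ∈ histsOfLength n with ¬ visitsT T h, M.hprob σ n h

lemma probAvoidBy_nonneg (M : POMDP S A Z) (T : Set S) (σ : Strategy S A Z M.obs) (n : ℕ) :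
    0 ≤ M.probAvoidBy T σ n :=
  sum_nonneg fun h _ => hprobAux_nonneg M σ n h.1 h.2

lemma probReachBy_eq_one_sub (M : POMDP S A Z) (T : Set S) (σ : Strategy S A Z M.obs) (n : ℕ) :
    M.probReachBy T σ n = 1 - M.probAvoidBy T σ n := by
  have hsupp : M.probReachBy T σ n = ∑ h ∈ histsOfLength n with visitsT T h, M.hprob σ n h := by
    rw [probReachBy, sum_filter]
    refine tsum_eq_sum fun h hh => ?_
    rw [hprob, hprobAux_eq_zero_of_length_ne M σ (mt mem_histsOfLength.mpr hh), ite_self]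
  rw [hsupp, eq_sub_iff_add_eq, probAvoidBy, sum_filter_add_sum_filter_not,
    sum_hprob_histsOfLength]

lemma probAvoidBy_succ_le (M : POMDP S A Z) (T : Set S) (σ : Strategy S A Z M.obs) (n : ℕ) :
    M.probAvoidBy T σ (n + 1) ≤ M.probAvoidBy T σ n := by
  let notVisits : Hist S A → ℝ := fun h => if visitsT T h then 0 else 1
  have hsum (m : ℕ) :
      M.probAvoidBy T σ m = ∑ h ∈ histsOfLength m, notVisits h * M.hprob σ m h := by
    simp [probAvoidBy, notVisits, sum_filter, ite_not]
  calc M.probAvoidBy T σ (n + 1)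
      = ∑ s : S, ∑ p : A × S, ∑ r ∈ listsOfLength n,
          notVisits (s, p :: r) * M.hprob σ (n + 1) (s, p :: r) := by
        rw [hsum, sum_histsOfLength_succ]
    _ ≤ ∑ s : S, ∑ p : A × S, ∑ r ∈ listsOfLength n,
          notVisits (p.2, r) * M.hprob σ (n + 1) (s, p :: r) := by
        gcongr with s _ p _ r _
        · exact hprobAux_nonneg M σ _ _ _
        · by_cases hv : visitsT T (p.2, r)
          · simp [notVisits, hv, visitsT_cons_s7 hv]
          · simp only [notVisits, hv, if_false]
            split_ifs <;> norm_num
    _ = M.probAvoidBy T σ n := by rw [sum_mul_hprob_succ, hsum]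

lemma probAvoidBy_antitone (M : POMDP S A Z) (T : Set S) (σ : Strategy S A Z M.obs) :
    Antitone (M.probAvoidBy T σ) :=
  antitone_nat_of_succ_le (M.probAvoidBy_succ_le T σ)

lemma almostSure_iff_tendsto_probAvoidBy (M : POMDP S A Z) (T : Set S)
    (σ : Strategy S A Z M.obs) :
    M.AlmostSure T σ ↔ Tendsto (M.probAvoidBy T σ) atTop (nhds 0) := by
  have hreach : M.probReachBy T σ = fun n => 1 - M.probAvoidBy T σ n :=
    funext (M.probReachBy_eq_one_sub T σ)
  have hmono : Monotone (M.probReachBy T σ) := by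
    rw [hreach]
    exact fun m n hmn => sub_le_sub_left (M.probAvoidBy_antitone T σ hmn) 1
  have hbdd : BddAbove (Set.range (M.probReachBy T σ)) := by
    refine ⟨1, ?_⟩
    rintro _ ⟨n, rfl⟩
    rw [hreach]
    linarith [M.probAvoidBy_nonneg T σ n]
  have hlim : Tendsto (M.probReachBy T σ) atTop (nhds (M.probReach T σ)) :=
    tendsto_atTop_ciSup hmono hbdd
  rw [hreach] at hlim
  constructor
  · intro h
    rw [AlmostSure] at h
    simpa [h] using (tendsto_const_nhds (x := (1 : ℝ))).sub hlim
  · intro h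
    exact tendsto_nhds_unique hlim (by simpa using (tendsto_const_nhds (x := (1 : ℝ))).sub h)

lemma probAvoidBy_le_mul_of_injective {M₁ M₂ : POMDP S A Z} {T : Set S}
    {σ₁ : Strategy S A Z M₁.obs} {σ₂ : Strategy S A Z M₂.obs} {n m : ℕ} {C : ℝ} (hC : 0 ≤ C)
    (e : Hist S A → Hist S A) (he : Function.Injective e)
    (he_len : ∀ h ∈ histsOfLength n, e h ∈ histsOfLength m)
    (hle : ∀ h ∈ histsOfLength n, ¬ visitsT T h → 0 < M₁.hprob σ₁ n h →
      ¬ visitsT T (e h) ∧ M₁.hprob σ₁ n h ≤ C * M₂.hprob σ₂ m (e h)) :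
    M₁.probAvoidBy T σ₁ n ≤ C * M₂.probAvoidBy T σ₂ m := by
  set Ppos := {h ∈ {h ∈ (histsOfLength n : Finset (Hist S A)) | ¬ visitsT T h} |
    0 < M₁.hprob σ₁ n h}
  have hPpos : ∀ h ∈ Ppos, h ∈ histsOfLength n ∧ ¬ visitsT T h ∧ 0 < M₁.hprob σ₁ n h :=
    fun h hh => by simpa [Ppos, and_assoc] using hh
  calc M₁.probAvoidBy T σ₁ n = ∑ h ∈ Ppos, M₁.hprob σ₁ n h :=
        (sum_filter_of_ne fun h _ hne =>
          lt_of_le_of_ne (hprobAux_nonneg M₁ σ₁ n h.1 h.2) hne.symm).symm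
    _ ≤ ∑ h ∈ Ppos, C * M₂.hprob σ₂ m (e h) := sum_le_sum fun h hh =>
        let ⟨hn, hv, hpos⟩ := hPpos h hh
        (hle h hn hv hpos).2
    _ = C * ∑ h ∈ Ppos.image e, M₂.hprob σ₂ m h := by rw [sum_image he.injOn, mul_sum]
    _ ≤ C * M₂.probAvoidBy T σ₂ m := by
        refine mul_le_mul_of_nonneg_left (sum_le_sum_of_subset_of_nonneg ?_ fun h _ _ =>
          hprobAux_nonneg M₂ σ₂ m h.1 h.2) hC
        intro h' hh'
        obtain ⟨h, hh, rfl⟩ := mem_image.mp hh'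
        obtain ⟨hn, hv, hpos⟩ := hPpos h hh
        exact mem_filter.mpr ⟨he_len h hn, (hle h hn hv hpos).1⟩

lemma Absorbing.eq_of_δ_pos {M : POMDP S A Z} {T : Set S} (habs : M.Absorbing T) {s t : S}
    {a : A} (hs : s ∈ T) (hδ : 0 < M.δ s a t) : t = s := by
  by_contra hts
  have hpair := sum_le_sum_of_subset_of_nonneg (f := M.δ s a) (subset_univ {s, t})
    fun x _ _ => M.δ_nonneg s a x
  rw [sum_pair (Ne.symm hts), M.δ_sum, habs s hs a] at hpair
  linarith

lemma uniformS_pos {U : Finset S} {s : S} (hs : s ∈ U) : 0 < uniformS U s := by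
  simp only [uniformS, if_pos hs]
  exact inv_pos.mpr (Nat.cast_pos.mpr (card_pos.mpr ⟨s, hs⟩))

lemma mem_updateF {M : POMDP S A Z} {U : Finset S} {z : Z} {a : A} {t : S} :
    t ∈ M.updateF U z a ↔ M.obs t = z ∧ ∃ s ∈ U, 0 < M.δ s a t := by
  simp [updateF]

lemma obs_eq_of_mem_updateF (M : POMDP S A Z) {U : Finset S} {z : Z} {a : A} :
    ∀ s ∈ M.updateF U z a, ∀ s' ∈ M.updateF U z a, M.obs s = M.obs s' :=
  fun _ hs _ hs' => (mem_updateF.mp hs).1.trans (mem_updateF.mp hs').1.symm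

lemma exists_probAvoidBy_updateF_le {M : POMDP S A Z} {T : Set S} (habs : M.Absorbing T)
    {U : Finset S} (hUne : U.Nonempty) (hobs : ∀ s ∈ U, ∀ s' ∈ U, M.obs s = M.obs s')
    (σ : Strategy S A Z M.obs) {a : A} {s₀ : S} (hs₀ : s₀ ∈ U) (ha : 0 < σ.act (s₀, []) a)
    {z : Z} (hV : (M.updateF U z a).Nonempty) :
    ∃ C, ∀ n, (M.reinit _ hV M.obs_eq_of_mem_updateF).probAvoidBy T (shiftStrat σ a s₀) n ≤
      C * (M.reinit U hUne hobs).probAvoidBy T σ (n + 1) := by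
  set V := M.updateF U z a
  have hpred : ∀ t, ∃ q ∈ U, t ∈ V → 0 < M.δ q a t := fun t => by
    by_cases ht : t ∈ V
    · obtain ⟨-, q, hq, hδ⟩ := mem_updateF.mp ht
      exact ⟨q, hq, fun _ => hδ⟩
    · exact ⟨s₀, hs₀, fun h => absurd h ht⟩
  choose pred hpredU hpredδ using hpred
  let w : S → ℝ := fun t => uniformS U (pred t) * σ.act (pred t, []) a * M.δ (pred t) a t
  have hw : ∀ t ∈ V, 0 < w t := fun t ht => by
    have hact : σ.act (pred t, []) = σ.act (s₀, []) :=
      σ.obsBased _ _ (by simp [obsHist, hobs _ (hpredU t) _ hs₀])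
    have := uniformS_pos (hpredU t)
    have := hpredδ t ht
    simp only [w, hact]
    positivity
  let C := ∑ t ∈ V, uniformS V t / w t
  have hC : 0 ≤ C := sum_nonneg fun t ht => div_nonneg (uniformS_nonneg V t) (hw t ht).le
  have hCw : ∀ t ∈ V, uniformS V t ≤ C * w t := fun t ht => by
    rw [← div_le_iff₀ (hw t ht)]
    exact single_le_sum (fun t' ht' => div_nonneg (uniformS_nonneg V t') (hw t' ht').le) ht
  refine ⟨C, fun n => probAvoidBy_le_mul_of_injective hC
    (fun h => (h.1, h.2 ++ [(a, pred (histStart h.1 h.2))])) ?_ ?_ ?_⟩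
  · intro h₁ h₂ heq
    simp only [Prod.mk.injEq] at heq
    exact Prod.ext heq.1 (List.append_inj' heq.2 rfl).1
  · intro h hh
    simpa [mem_histsOfLength] using hh
  rintro ⟨s, l⟩ - hvis hpos
  set t := histStart s l
  set D := (M.resetDirac t).hprobAux (shiftStrat σ a s₀) n s l
  have hprobV : (M.reinit V hV M.obs_eq_of_mem_updateF).hprob (shiftStrat σ a s₀) n (s, l) =
      uniformS V t * D :=
    hprobAux_eq_init_mul_resetDirac _ _ n s l
  have ht : t ∈ V := by
    by_contra ht
    have hpos' : 0 < uniformS V t * D := hprobV ▸ hpos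
    simp [uniformS, ht] at hpos'
  have hprobU : (M.reinit U hUne hobs).hprob σ (n + 1) (s, l ++ [(a, pred t)]) = w t * D :=
    (hprobAux_append_singleton (M.reinit U hUne hobs) σ a (pred t) n s l).trans
      (congrArg (fun τ => w t * (M.resetDirac t).hprobAux τ n s l)
        (shiftStrat_eq_of_obs_eq σ a (hobs _ (hpredU t) _ hs₀)))
  constructor
  · rw [visitsT_append_singleton]
    rintro (hv | hqT)
    · exact hvis hv
    · have htq : t = pred t := habs.eq_of_δ_pos hqT (hpredδ t ht)
      exact hvis (visitsT_of_histStart_mem (show t ∈ T from htq ▸ hqT))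
  · rw [hprobV, hprobU, ← mul_assoc]
    exact mul_le_mul_of_nonneg_right (hCw t ht) (hprobAux_nonneg _ _ n s l)

end POMDP

/-- For every almost-sure winning belief-support `U`, the set
of allowed actions `Allow(U)` is nonempty. -/
theorem allowSet_nonempty
    {S A Z : Type} [Fintype S] [Fintype A] [Fintype Z]
    (M : POMDP S A Z) (T : Set S)
    (habs : M.Absorbing T)
    (U : Finset S) (hU : U ∈ M.BeliefWin T) :
    (M.AllowSet T U).Nonempty := by
  obtain ⟨hUne, hobs, σ, hσ⟩ := hU
  obtain ⟨s₀, hs₀⟩ := id hUne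
  obtain ⟨a, ha⟩ := σ.exists_act_pos (s₀, [])
  refine ⟨a, fun z hV => ⟨hV, M.obs_eq_of_mem_updateF, POMDP.shiftStrat σ a s₀, ?_⟩⟩
  obtain ⟨C, hC⟩ := POMDP.exists_probAvoidBy_updateF_le habs hUne hobs σ hs₀ ha hV
  have hfail := ((M.reinit U hUne hobs).almostSure_iff_tendsto_probAvoidBy T σ).mp hσ
  refine ((M.reinit _ hV M.obs_eq_of_mem_updateF).almostSure_iff_tendsto_probAvoidBy T _).mpr
    (squeeze_zero (POMDP.probAvoidBy_nonneg _ T _) hC ?_)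
  simpa using (hfail.comp (tendsto_add_atTop_nat 1)).const_mul C
end
end
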